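/- Let G be a finite cubic graph (every vertex has degree exactly 3) with vertex set V and edge set E, and let D be the digraph with vertices {w_i, w'_i, w''_i : i ∈ V} ∪ {z_e, z'_e : e ∈ E} and arcs (w_i, w'_i), (w'_i, w''_i) for each i, and (z'_e, z_e), (z_e, w_i), (z_e, w_j) for each edge e = ij. If C ⊆ V is a vertex cover of G, then Q = {w''_i : i ∈ V} ∪ {w_i : i ∈ C} is a quasi-kernel of D of size |C| + |V|. -/
import Mathlib


/-- A directed path of length at most 2 from `v` to `w` in the digraph with arc
relation `A`. -/
def Reach2 {V : Type*} (A : V → V → Prop) (v w : V) : Prop :=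
  w = v ∨ A v w ∨ ∃ x, A v x ∧ A x w

/-- `Q` is independent in the digraph with arc relation `A`. -/
def Indep {V : Type*} (A : V → V → Prop) (Q : Set V) : Prop :=
  ∀ u ∈ Q, ∀ v ∈ Q, u ≠ v → ¬ A u v ∧ ¬ A v u

/-- `Q` is a quasi-kernel: independent and every vertex reaches `Q` within distance 2. -/
def IsQuasiKernel {V : Type*} (A : V → V → Prop) (Q : Set V) : Prop :=
  Indep A Q ∧ ∀ v, ∃ w ∈ Q, Reach2 A v w

/-- Vertices of the digraph built from a cubic graph `G`: `(i, 0) = wᵢ`, `(i, 1) = w'ᵢ`,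
`(i, 2) = w''ᵢ` for each vertex `i`, and `(e, false) = z_e`, `(e, true) = z'_e` for each
edge `e`. -/
abbrev CubicVertex {V : Type*} (G : SimpleGraph V) := (V × Fin 3) ⊕ (G.edgeSet × Bool)

/-- Arcs: `wᵢ → w'ᵢ → w''ᵢ`, `z'_e → z_e`, and `z_e → wᵢ` for each endpoint `i` of `e`. -/
def cubicArc {V : Type*} (G : SimpleGraph V) :
    CubicVertex G → CubicVertex G → Prop
  | .inl (i, a), .inl (j, b) => i = j ∧ ((a = 0 ∧ b = 1) ∨ (a = 1 ∧ b = 2))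
  | .inr (e, b₁), .inr (f, b₂) => e = f ∧ b₁ = true ∧ b₂ = false
  | .inr (e, b), .inl (i, a) => b = false ∧ a = 0 ∧ i ∈ (e : Sym2 V)
  | _, _ => False

/-- From a vertex cover `C` of a cubic graph `G`, the set
`{w''ᵢ : i ∈ V} ∪ {wᵢ : i ∈ C}` is a quasi-kernel of the associated digraph of size
`|C| + |V|`. -/
theorem vertexCover_gives_quasiKernel {V : Type*} [Fintype V] [DecidableEq V]
    (G : SimpleGraph V) [DecidableRel G.Adj] (hcubic : ∀ v : V, G.degree v = 3)
    (C : Finset V) (hC : ∀ ⦃u v : V⦄, G.Adj u v → u ∈ C ∨ v ∈ C) :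
    IsQuasiKernel (cubicArc G)
      ↑((Finset.univ.image fun i : V => (Sum.inl (i, (2 : Fin 3)) : CubicVertex G)) ∪
        (C.image fun i : V => (Sum.inl (i, (0 : Fin 3)) : CubicVertex G))) ∧
    ((Finset.univ.image fun i : V => (Sum.inl (i, (2 : Fin 3)) : CubicVertex G)) ∪
        (C.image fun i : V => (Sum.inl (i, (0 : Fin 3)) : CubicVertex G))).card =
      C.card + Fintype.card V := by
  constructor
  · constructor
    · rintro u hu v hv hne
      simp only [Finset.coe_union, Set.mem_union, Finset.coe_image, Set.mem_image,
        Finset.mem_coe, Finset.coe_univ, Set.image_univ, Set.mem_range] at hu hv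
      obtain ⟨i, rfl⟩ | ⟨i, hi, rfl⟩ := hu <;>
        obtain ⟨j, rfl⟩ | ⟨j, hj, rfl⟩ := hv <;>
        constructor <;>
        · rintro ⟨rfl, ⟨h1, h2⟩ | ⟨h1, h2⟩⟩ <;> simp_all
    · rintro (⟨i, a⟩ | ⟨e, b⟩)
      · fin_cases a
        · refine ⟨Sum.inl (i, 2), ?_, Or.inr (Or.inr ⟨Sum.inl (i, 1), ?_, ?_⟩)⟩
          · simp
          · exact ⟨rfl, Or.inl ⟨rfl, rfl⟩⟩
          · exact ⟨rfl, Or.inr ⟨rfl, rfl⟩⟩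
        · exact ⟨Sum.inl (i, 2), by simp, Or.inr (Or.inl ⟨rfl, Or.inr ⟨rfl, rfl⟩⟩)⟩
        · exact ⟨Sum.inl (i, 2), by simp, Or.inl rfl⟩
      · obtain ⟨s, hs⟩ := e
        induction s with
        | h x y =>
          have hadj : G.Adj x y := hs
          have hxy : x ∈ C ∨ y ∈ C := hC hadj
          obtain hx | hy := hxy
          · cases b
            · exact ⟨Sum.inl (x, 0), by simp [hx],
                Or.inr (Or.inl ⟨rfl, rfl, by simp⟩)⟩
            · exact ⟨Sum.inl (x, 0), by simp [hx],
                Or.inr (Or.inr ⟨Sum.inr (⟨s(x,y), hs⟩, false), ⟨rfl, rfl, rfl⟩,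
                  ⟨rfl, rfl, by simp⟩⟩)⟩
          · cases b
            · exact ⟨Sum.inl (y, 0), by simp [hy],
                Or.inr (Or.inl ⟨rfl, rfl, by simp⟩)⟩
            · exact ⟨Sum.inl (y, 0), by simp [hy],
                Or.inr (Or.inr ⟨Sum.inr (⟨s(x,y), hs⟩, false), ⟨rfl, rfl, rfl⟩,
                  ⟨rfl, rfl, by simp⟩⟩)⟩
  · rw [Finset.card_union_of_disjoint, Finset.card_image_of_injective,
      Finset.card_image_of_injective, Finset.card_univ, Nat.add_comm]
    · intro a b hab; simpa using hab
    · intro a b hab; simpa using hab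
    · simp [Finset.disjoint_left]
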